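/- arXiv:1802.02466 — 3 statements merged into one kernel-verified Lean document; each statement's English description precedes it below -/
import Mathlib

section
/- Define f(α) = (3/4)[(3α−π)cos α + 2 sin α − 2 sin 2α + sin 3α] for π/3 ≤ α < π/2, f(α) = (1/4)[3(π−α)cos α + 3 sin α − 2 sin 2α] for π/2 ≤ α ≤ π, and f(α) = 0 otherwise. Then ∫₀^π f(α) dα = 1. -/
/-! The density vanishes below `π/3`, and on each of its two branches it has an elementary
primitive, found by integrating `(3α - π) cos α` and `3 (π - α) cos α` by parts. Splitting the
integral at `π/3` and `π/2`, the fundamental theorem of calculus gives the two pieces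
`3π/8 - 1` and `2 - 3π/8`, whose sum is `1`. -/

open Real MeasureTheory intervalIntegral

open Set in
theorem intervalIntegral.integral_eq_sub_of_eqOn_uIoo {f f' F : ℝ → ℝ} {a b : ℝ}
    (hF : ∀ x ∈ uIcc a b, HasDerivAt F (f' x) x) (hf' : IntervalIntegrable f' volume a b)
    (h : EqOn f f' (uIoo a b)) :
    IntervalIntegrable f volume a b ∧ ∫ x in a..b, f x = F b - F a :=
  ⟨(intervalIntegrable_congr_uIoo h).mpr hf',
    (integral_congr_uIoo h).trans (integral_eq_sub_of_hasDerivAt hF hf')⟩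

namespace MaxAngle

noncomputable def densityAcute (α : ℝ) : ℝ :=
  (3/4) * ((3*α - π) * cos α + 2 * sin α - 2 * sin (2*α) + sin (3*α))

noncomputable def densityObtuse (α : ℝ) : ℝ :=
  (1/4) * (3*(π - α) * cos α + 3 * sin α - 2 * sin (2*α))

noncomputable def primitiveAcute (α : ℝ) : ℝ :=
  (3/4) * ((3*α - π) * sin α + cos α + cos (2*α) - cos (3*α) / 3)

noncomputable def primitiveObtuse (α : ℝ) : ℝ :=
  (1/4) * (3*(π - α) * sin α - 6 * cos α + cos (2*α))

lemma continuous_densityAcute : Continuous densityAcute := by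
  unfold densityAcute; fun_prop

lemma continuous_densityObtuse : Continuous densityObtuse := by
  unfold densityObtuse; fun_prop

lemma hasDerivAt_cos_const_mul (c x : ℝ) :
    HasDerivAt (fun x => cos (c * x)) (-sin (c * x) * c) x := by
  simpa using ((hasDerivAt_id x).const_mul c).cos

lemma hasDerivAt_primitiveAcute (x : ℝ) : HasDerivAt primitiveAcute (densityAcute x) x := by
  have hlin : HasDerivAt (fun x => 3*x - π) 3 x := by
    simpa using ((hasDerivAt_id x).const_mul 3).sub_const π
  have h := ((((hlin.mul (hasDerivAt_sin x)).add (hasDerivAt_cos x)).add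
    (hasDerivAt_cos_const_mul 2 x)).sub ((hasDerivAt_cos_const_mul 3 x).div_const 3)).const_mul
    (3/4 : ℝ)
  exact h.congr_deriv (by rw [densityAcute]; ring)

lemma hasDerivAt_primitiveObtuse (x : ℝ) : HasDerivAt primitiveObtuse (densityObtuse x) x := by
  have hlin : HasDerivAt (fun x => 3*(π - x)) (-3) x := by
    simpa using ((hasDerivAt_id x).const_sub π).const_mul 3
  have h := (((hlin.mul (hasDerivAt_sin x)).sub ((hasDerivAt_cos x).const_mul 6)).add
    (hasDerivAt_cos_const_mul 2 x)).const_mul (1/4 : ℝ)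
  exact h.congr_deriv (by rw [densityObtuse]; ring)

lemma primitiveAcute_sub : primitiveAcute (π/2) - primitiveAcute (π/3) = 3*π/8 - 1 := by
  simp only [primitiveAcute]
  rw [show 2*(π/2) = π by ring, show 3*(π/2) = π/2 + π by ring, show 2*(π/3) = π - π/3 by ring,
    show 3*(π/3) = π by ring, cos_add_pi, cos_pi_sub, cos_pi, cos_pi_div_two, sin_pi_div_two,
    cos_pi_div_three]
  ring

lemma primitiveObtuse_sub : primitiveObtuse π - primitiveObtuse (π/2) = 2 - 3*π/8 := by
  simp only [primitiveObtuse]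
  rw [show 2*(π/2) = π by ring, sin_pi, cos_pi, cos_two_pi, cos_pi_div_two, sin_pi_div_two]
  ring

end MaxAngle

open MaxAngle in
theorem stmt_3 (f : ℝ → ℝ)
    (hf : ∀ α : ℝ, f α =
      if π/3 ≤ α ∧ α < π/2 then
        (3/4) * ((3*α - π) * Real.cos α + 2 * Real.sin α - 2 * Real.sin (2*α) + Real.sin (3*α))
      else if π/2 ≤ α ∧ α ≤ π then
        (1/4) * (3*(π - α) * Real.cos α + 3 * Real.sin α - 2 * Real.sin (2*α))
      else 0) :
    (∫ α in (0:ℝ)..π, f α) = 1 := by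
  have hπ := pi_pos
  have hzero : Set.EqOn f (fun _ => 0) (Set.uIoo 0 (π/3)) := fun x hx => by
    rw [Set.uIoo_of_le (by positivity)] at hx
    rw [hf, if_neg (by intro h; linarith [hx.2, h.1]), if_neg (by intro h; linarith [hx.2, h.1])]
  have hacute : Set.EqOn f densityAcute (Set.uIoo (π/3) (π/2)) := fun x hx => by
    rw [Set.uIoo_of_le (by linarith)] at hx
    rw [hf, if_pos ⟨hx.1.le, hx.2⟩, densityAcute]
  have hobtuse : Set.EqOn f densityObtuse (Set.uIoo (π/2) π) := fun x hx => by
    rw [Set.uIoo_of_le (by linarith)] at hx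
    rw [hf, if_neg (by intro h; linarith [hx.1, h.2]), if_pos ⟨hx.1.le, hx.2.le⟩, densityObtuse]
  obtain ⟨i₀, e₀⟩ := integral_eq_sub_of_eqOn_uIoo (fun x _ => hasDerivAt_const x (0 : ℝ))
    intervalIntegrable_const hzero
  obtain ⟨i₁, e₁⟩ := integral_eq_sub_of_eqOn_uIoo (fun x _ => hasDerivAt_primitiveAcute x)
    (continuous_densityAcute.intervalIntegrable _ _) hacute
  obtain ⟨i₂, e₂⟩ := integral_eq_sub_of_eqOn_uIoo (fun x _ => hasDerivAt_primitiveObtuse x)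
    (continuous_densityObtuse.intervalIntegrable _ _) hobtuse
  rw [← integral_add_adjacent_intervals i₀ (i₁.trans i₂), ← integral_add_adjacent_intervals i₁ i₂,
    e₀, e₁, e₂, primitiveAcute_sub, primitiveObtuse_sub]
  ring
end

section
/- If f(α) = (1/2)[cos α + sin α + cos 2α − 2 sin 2α] for π/2 ≤ α ≤ π and 0 otherwise, then f is nonnegative on [π/2, π] and ∫_{π/2}^{π} f(α) dα = 1. -/
open Real MeasureTheory intervalIntegral

/-! With `s = sin α` and `c = cos α`, the density factors as
`½ (s - c - 1) (2 (s - c + 1) - (s + c))`; on `[π/2, π]` we have `s ≥ 0 ≥ c`, hence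
`(s - c)² = 1 - 2sc ≥ 1` and `s - c ≥ 1`, so both factors are nonnegative. The integral follows
from the antiderivative `½ (sin α - cos α + ½ sin 2α + cos 2α)`. -/

noncomputable def maxAngleDensity (α : ℝ) : ℝ :=
  (1/2) * (cos α + sin α + cos (2*α) - 2 * sin (2*α))

lemma maxAngleDensity_eq_mul (α : ℝ) :
    maxAngleDensity α =
      (1/2) * ((sin α - cos α - 1) * (2 * (sin α - cos α + 1) - (sin α + cos α))) := by
  rw [maxAngleDensity, cos_two_mul, sin_two_mul]
  linear_combination (-1/2 : ℝ) * sin_sq_add_cos_sq α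

lemma one_le_sin_sub_cos {α : ℝ} (h₁ : π/2 ≤ α) (h₂ : α ≤ π) : 1 ≤ sin α - cos α := by
  have hs : 0 ≤ sin α := sin_nonneg_of_nonneg_of_le_pi (by linarith [pi_pos]) h₂
  have hc : cos α ≤ 0 := cos_nonpos_of_pi_div_two_le_of_le h₁ (by linarith [pi_pos])
  have hsq : 1 ≤ (sin α - cos α) ^ 2 := by
    nlinarith [sin_sq_add_cos_sq α, mul_nonpos_of_nonneg_of_nonpos hs hc]
  nlinarith

lemma maxAngleDensity_nonneg {α : ℝ} (h₁ : π/2 ≤ α) (h₂ : α ≤ π) : 0 ≤ maxAngleDensity α := by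
  have hu := one_le_sin_sub_cos h₁ h₂
  rw [maxAngleDensity_eq_mul]
  have hsum : sin α + cos α ≤ 2 := by linarith [sin_le_one α, cos_le_one α]
  have hfactor : 0 ≤ 2 * (sin α - cos α + 1) - (sin α + cos α) := by linarith
  positivity

lemma hasDerivAt_maxAngleDensity_antideriv (x : ℝ) :
    HasDerivAt (fun α => (1/2) * (sin α - cos α + sin (2*α) / 2 + cos (2*α)))
      (maxAngleDensity x) x := by
  have hlin : HasDerivAt (fun α : ℝ => 2*α) 2 x := by simpa using (hasDerivAt_id x).const_mul 2
  have hsin₂ := (hasDerivAt_sin (2*x)).comp x hlin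
  have hcos₂ := (hasDerivAt_cos (2*x)).comp x hlin
  refine (((((hasDerivAt_sin x).sub (hasDerivAt_cos x)).add (hsin₂.div_const 2)).add
    hcos₂).const_mul (1/2 : ℝ)).congr_deriv ?_
  rw [maxAngleDensity]
  ring

lemma integral_maxAngleDensity : ∫ α in (π/2)..π, maxAngleDensity α = 1 := by
  rw [integral_eq_sub_of_hasDerivAt (fun x _ => hasDerivAt_maxAngleDensity_antideriv x)
    (by unfold maxAngleDensity; exact Continuous.intervalIntegrable (by fun_prop) _ _)]
  have h : (2:ℝ) * (π/2) = π := by ring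
  simp only [h, sin_pi, cos_pi, sin_two_pi, cos_two_pi, sin_pi_div_two, cos_pi_div_two]
  norm_num

theorem stmt_6 (f : ℝ → ℝ)
    (hf : ∀ α : ℝ, f α =
      if π/2 ≤ α ∧ α ≤ π then
        (1/2) * (Real.cos α + Real.sin α + Real.cos (2*α) - 2 * Real.sin (2*α))
      else 0) :
    (∀ α ∈ Set.Icc (π/2) π, 0 ≤ f α) ∧ (∫ α in (π/2)..π, f α) = 1 := by
  have hf_Icc : ∀ α ∈ Set.Icc (π/2) π, f α = maxAngleDensity α :=
    fun α hα => (hf α).trans (if_pos hα)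
  refine ⟨fun α hα => hf_Icc α hα ▸ maxAngleDensity_nonneg hα.1 hα.2, ?_⟩
  rw [← integral_maxAngleDensity]
  refine integral_congr fun α hα => hf_Icc α ?_
  rwa [Set.uIcc_of_le (by linarith [pi_pos])] at hα
end

section
/- Let g(ω) = sin(ω)/√2 on [π/4, 3π/4]. For π/2 ≤ a ≤ π, the quantity 2[∫_{π/4}^{5π/4−a} ∫_{5π/4−a}^{3π/4} g(ω₃)g(ω₂) dω₃ dω₂ + ∫_{5π/4−a}^{3π/4} ∫_{ω₂}^{3π/4} g(ω₃)g(ω₂) dω₃ dω₂] equals (1/4)[2 − 2 cos a − 2 sin a − sin 2a]. -/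
open Real MeasureTheory intervalIntegral

/-! With `s = ∫_{5π/4-a}^{3π/4} g`, the first double integral is a rectangle and factors as
`s (1 - s)`, since `∫_{π/4}^{3π/4} g = 1`; the second is a triangle and equals `s² / 2`, as
`-(∫_x^{3π/4} g)² / 2` is a primitive of its inner integral. Hence the sum is
`2 s - s² = 1 - (1 - s)²`, and `s = (1 - cos a - sin a) / 2`. -/

theorem intervalIntegral_integral_mul_eq_mul (f g : ℝ → ℝ) (a b c d : ℝ) :
    ∫ x in a..b, ∫ y in c..d, f y * g x = (∫ y in c..d, f y) * ∫ x in a..b, g x := by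
  simp only [intervalIntegral.integral_mul_const, intervalIntegral.integral_const_mul]

theorem intervalIntegral_integral_mul_triangle {f : ℝ → ℝ} (hf : Continuous f) (a b : ℝ) :
    ∫ x in a..b, ∫ y in x..b, f y * f x = (∫ x in a..b, f x) ^ 2 / 2 := by
  set F : ℝ → ℝ := fun u => ∫ y in u..b, f y
  have hF : ∀ x, HasDerivAt F (-f x) x := fun x =>
    integral_hasDerivAt_left (hf.intervalIntegrable _ _) (hf.stronglyMeasurableAtFilter _ _)
      hf.continuousAt
  have hF_cont : Continuous F := continuous_iff_continuousAt.2 fun x => (hF x).continuousAt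
  have hprim : ∀ x ∈ Set.uIcc a b, HasDerivAt (fun u => -(F u * F u) / 2) (F x * f x) x :=
    fun x _ => (((hF x).mul (hF x)).neg.div_const 2).congr_deriv (by ring)
  simp only [intervalIntegral.integral_mul_const]
  rw [integral_eq_sub_of_hasDerivAt hprim ((hF_cont.mul hf).intervalIntegrable _ _)]
  simp only [F, integral_same, mul_zero, neg_zero, zero_div, zero_sub]
  ring

theorem cos_five_pi_div_four_sub (a : ℝ) : cos (5 * π / 4 - a) = -(cos a + sin a) / √2 := by
  have h : 5 * π / 4 - a = π + (π / 4 - a) := by ring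
  rw [h, cos_add, cos_pi, sin_pi, cos_sub, cos_pi_div_four, sin_pi_div_four]
  field_simp
  linear_combination -(cos a + sin a) * mul_self_sqrt zero_le_two

theorem integral_sin_div_sqrt_two (p q : ℝ) : ∫ x in p..q, sin x / √2 = (cos p - cos q) / √2 := by
  rw [intervalIntegral.integral_div, integral_sin]

theorem integral_sin_div_sqrt_two_from_pi_div_four (a : ℝ) :
    ∫ x in π / 4..5 * π / 4 - a, sin x / √2 = (1 + cos a + sin a) / 2 := by
  rw [integral_sin_div_sqrt_two, cos_five_pi_div_four_sub, cos_pi_div_four]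
  field_simp
  linear_combination -(cos a + sin a) * mul_self_sqrt zero_le_two

theorem integral_sin_div_sqrt_two_to_three_pi_div_four (a : ℝ) :
    ∫ x in 5 * π / 4 - a..3 * π / 4, sin x / √2 = (1 - cos a - sin a) / 2 := by
  have h : 3 * π / 4 = π - π / 4 := by ring
  rw [integral_sin_div_sqrt_two, h, cos_pi_sub, cos_five_pi_div_four_sub, cos_pi_div_four]
  field_simp
  linear_combination (cos a + sin a) * mul_self_sqrt zero_le_two

theorem stmt_13 (g : ℝ → ℝ)
    (hg : ∀ ω ∈ Set.Icc (π/4) (3*π/4), g ω = Real.sin ω / Real.sqrt 2)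
    (a : ℝ) (ha1 : π/2 ≤ a) (ha2 : a ≤ π) :
    2 * ((∫ ω₂ in (π/4)..(5*π/4 - a), ∫ ω₃ in (5*π/4 - a)..(3*π/4), g ω₃ * g ω₂) +
         (∫ ω₂ in (5*π/4 - a)..(3*π/4), ∫ ω₃ in ω₂..(3*π/4), g ω₃ * g ω₂)) =
      (1/4) * (2 - 2 * Real.cos a - 2 * Real.sin a - Real.sin (2*a)) := by
  set I := Set.Icc (π / 4) (3 * π / 4)
  have hgI : ∀ p ∈ I, ∀ q ∈ I, Set.EqOn g (fun x => sin x / √2) (Set.uIcc p q) :=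
    fun p hp q hq x hx => hg x (Set.uIcc_subset_Icc hp hq hx)
  have hl : π / 4 ∈ I := ⟨le_rfl, by linarith [pi_pos]⟩
  have hr : 3 * π / 4 ∈ I := ⟨by linarith [pi_pos], le_rfl⟩
  have hc : 5 * π / 4 - a ∈ I := ⟨by linarith, by linarith⟩
  have hleft : ∫ x in π / 4..5 * π / 4 - a, g x = (1 + cos a + sin a) / 2 := by
    rw [integral_congr (hgI _ hl _ hc), integral_sin_div_sqrt_two_from_pi_div_four]
  have hright : ∫ x in 5 * π / 4 - a..3 * π / 4, g x = (1 - cos a - sin a) / 2 := by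
    rw [integral_congr (hgI _ hc _ hr), integral_sin_div_sqrt_two_to_three_pi_div_four]
  have htriangle : ∫ ω₂ in 5 * π / 4 - a..3 * π / 4, ∫ ω₃ in ω₂..3 * π / 4, g ω₃ * g ω₂ =
      (∫ x in 5 * π / 4 - a..3 * π / 4, g x) ^ 2 / 2 := by
    have hinner : Set.EqOn (fun ω₂ => ∫ ω₃ in ω₂..3 * π / 4, g ω₃ * g ω₂)
        (fun ω₂ => ∫ ω₃ in ω₂..3 * π / 4, sin ω₃ / √2 * (sin ω₂ / √2))
        (Set.uIcc (5 * π / 4 - a) (3 * π / 4)) := fun ω₂ hω₂ => by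
      have hω₂I : ω₂ ∈ I := Set.uIcc_subset_Icc hc hr hω₂
      exact integral_congr fun ω₃ hω₃ => by
        simp only [hgI _ hω₂I _ hr hω₃, hg _ hω₂I]
    rw [integral_congr hinner, integral_congr (hgI _ hc _ hr),
      intervalIntegral_integral_mul_triangle (continuous_sin.div_const _)]
  rw [intervalIntegral_integral_mul_eq_mul, htriangle, hleft, hright, sin_two_mul]
  linear_combination (-1 / 4) * sin_sq_add_cos_sq a
end
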